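/- The set U of excursions from the boundary of S into S is a measurable subset of C([0,∞), cl(S)): i.e., the set of continuous functions u : [0,∞) → cl(S) such that u(0) ∈ ∂S and there exists R > 0 with u(t) ∈ S for 0 < t < R and u(t) ∈ ∂S for all t ≥ R, is a Borel subset of C([0,∞), cl(S)) with the compact-open topology. -/

import Mathlib

/-!
Since `S` is open, a point of `cl S` lies in `S` exactly when it avoids the closed set
`F = ∂S`. For a path in `cl S`, having a time `R > 0` before which it stays off `F` and after
which it stays in `F` is then equivalent to three conditions: its visits to `F` after time `0`
form an upper set, it is off `F` at some positive time, and it eventually stays in `F`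
(`R` is recovered as the first visit to `F` after such a time). Each condition is Borel for the
compact-open topology: the last two come from the closed sets `{u | u '' K ⊆ F}`, and a failure
of the first is witnessed by times `p < q` from a countable dense set with `u q ∉ F` and
`u '' [p, q] ⊄ Fᶜ`.
-/

open MeasureTheory Set NNReal

theorem exists_threshold_iff_isUpperSet_inter_Ioi {α : Type*} [ConditionallyCompleteLinearOrder α]
    [TopologicalSpace α] [OrderTopology α] [DenselyOrdered α] {Z : Set α} (hZ : IsClosed Z)
    (a : α) :
    (∃ R, a < R ∧ (∀ t, a < t → t < R → t ∉ Z) ∧ ∀ t, R ≤ t → t ∈ Z) ↔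
      IsUpperSet (Z ∩ Ioi a) ∧ ¬ Ioi a ⊆ Z ∧ ∃ T, Ici T ⊆ Z := by
  constructor
  · rintro ⟨R, haR, hbefore, hafter⟩
    have hR_le : ∀ s ∈ Z ∩ Ioi a, R ≤ s := fun s hs =>
      not_lt.1 fun hsR => hbefore s hs.2 hsR hs.1
    obtain ⟨t, hat, htR⟩ := exists_between haR
    exact ⟨fun s t hst hs => ⟨hafter t ((hR_le s hs).trans hst), hs.2.trans_le hst⟩,
      fun h => hbefore t hat htR (h hat), R, fun t ht => hafter t ht⟩
  · rintro ⟨hup, hout, T, hT⟩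
    obtain ⟨t₀, hat₀, ht₀⟩ := not_subset.1 hout
    have hlate : ∀ s ∈ Z ∩ Ioi a, t₀ < s := fun s hs =>
      not_le.1 fun hst₀ => ht₀ (hup hst₀ hs).1
    set K := Z ∩ Ici t₀
    have hK : sInf K ∈ K := (hZ.inter isClosed_Ici).csInf_mem
      ⟨max T t₀, hT (le_max_left _ _), le_max_right _ _⟩ ⟨t₀, fun _ hs => hs.2⟩
    have haK : a < sInf K := hat₀.trans_le hK.2
    refine ⟨sInf K, haK, fun t hat htK htZ => ?_, fun t ht => (hup ht ⟨hK.1, haK⟩).1⟩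
    exact htK.not_ge (csInf_le ⟨t₀, fun _ hs => hs.2⟩ ⟨htZ, (hlate t ⟨htZ, hat⟩).le⟩)

section

variable {Y : Type*} [TopologicalSpace Y] {F : Set Y}

theorem measurableSet_setOf_isUpperSet_preimage_inter_Ioi {X : Type*} [TopologicalSpace X]
    [LinearOrder X] [OrderTopology X] [DenselyOrdered X] [TopologicalSpace.SeparableSpace X]
    [CompactIccSpace X] [MeasurableSpace C(X, Y)] [BorelSpace C(X, Y)]
    (hF : IsClosed F) (a : X) :
    MeasurableSet {u : C(X, Y) | IsUpperSet (u ⁻¹' F ∩ Ioi a)} := by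
  obtain ⟨D, hDc, hD⟩ := TopologicalSpace.exists_countable_dense X
  have hcompl : {u : C(X, Y) | IsUpperSet (u ⁻¹' F ∩ Ioi a)}ᶜ =
      ⋃ p ∈ D ∩ Ioi a, ⋃ q ∈ D,
        {u : C(X, Y) | u q ∈ Fᶜ} ∩ {u : C(X, Y) | MapsTo u (Icc p q) Fᶜ}ᶜ := by
    ext u
    simp only [mem_compl_iff, mem_ofPred_eq, mem_iUnion, mem_inter_iff, exists_prop]
    constructor
    · intro hnot
      simp only [IsUpperSet, not_forall] at hnot
      obtain ⟨s, t, hst, ⟨hsF, has⟩, ht⟩ := hnot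
      have htF : u t ∈ Fᶜ := fun htF => ht ⟨htF, has.trans_le hst⟩
      have hst' : s < t := hst.lt_of_ne fun h => htF (h ▸ hsF)
      obtain ⟨p, hpD, hap, hps⟩ := hD.exists_mem_open isOpen_Ioo (nonempty_Ioo.2 has)
      obtain ⟨q, hqD, hqF, hsq⟩ := hD.exists_mem_open
        ((hF.isOpen_compl.preimage u.continuous).inter isOpen_Ioi) ⟨t, htF, hst'⟩
      exact ⟨p, ⟨hpD, hap⟩, q, hqD, hqF, fun hmaps => hmaps ⟨hps.le, hsq.le⟩ hsF⟩
    · rintro ⟨p, ⟨-, hap⟩, q, -, hqF, hmaps⟩ hup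
      exact hmaps fun s hs hsF => hqF (hup hs.2 ⟨hsF, hap.trans_le hs.1⟩).1
  refine MeasurableSet.of_compl ?_
  rw [hcompl]
  exact .biUnion (hDc.mono inter_subset_left) fun p _ => .biUnion hDc fun q _ =>
    (hF.isOpen_compl.preimage (continuous_eval_const q)).measurableSet.inter
      (ContinuousMap.isOpen_setOfPred_mapsTo isCompact_Icc hF.isOpen_compl).measurableSet.compl

theorem measurableSet_setOf_exists_Ici_subset_preimage [MeasurableSpace C(ℝ≥0, Y)]
    [BorelSpace C(ℝ≥0, Y)] (hF : IsClosed F) :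
    MeasurableSet {u : C(ℝ≥0, Y) | ∃ T, Ici T ⊆ u ⁻¹' F} := by
  have hset : {u : C(ℝ≥0, Y) | ∃ T, Ici T ⊆ u ⁻¹' F} =
      ⋃ n : ℕ, {u : C(ℝ≥0, Y) | MapsTo u (Ici (n : ℝ≥0)) F} := by
    ext u
    simp only [mem_ofPred_eq, mem_iUnion]
    exact ⟨fun ⟨T, hT⟩ => ⟨⌈T⌉₊, (Ici_subset_Ici.2 (Nat.le_ceil T)).trans hT⟩,
      fun ⟨n, hn⟩ => ⟨n, hn⟩⟩
  rw [hset]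
  exact .iUnion fun n => (ContinuousMap.isClosed_setOfPred_mapsTo hF _).measurableSet

end

/-- The set `U` of excursions from `∂S` into `S`, viewed inside the
space `C([0,∞), cl S)` of continuous paths with values in the closure of `S`
(compact-open topology), is Borel measurable. We model `C([0,∞), cl S)` as the
set of `u : C(ℝ≥0, ℝ)` taking values in `closure S`. -/
theorem excursion_set_measurable (S : Set ℝ) (hS : IsOpen S) :
    MeasurableSet[borel C(ℝ≥0, ℝ)]
      {u : C(ℝ≥0, ℝ) | (∀ t, u t ∈ closure S) ∧ u 0 ∈ frontier S ∧
        ∃ R : ℝ≥0, 0 < R ∧ (∀ t, 0 < t → t < R → u t ∈ S) ∧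
          ∀ t, R ≤ t → u t ∈ frontier S} := by
  let : MeasurableSpace C(ℝ≥0, ℝ) := borel _
  have : BorelSpace C(ℝ≥0, ℝ) := ⟨rfl⟩
  have hF : IsClosed (frontier S) := isClosed_frontier
  have hSF : ∀ x ∈ closure S, x ∈ S ↔ x ∉ frontier S := fun x hx => by
    simp [hS.frontier_eq, hx]
  have hset : {u : C(ℝ≥0, ℝ) | (∀ t, u t ∈ closure S) ∧ u 0 ∈ frontier S ∧
        ∃ R : ℝ≥0, 0 < R ∧ (∀ t, 0 < t → t < R → u t ∈ S) ∧
          ∀ t, R ≤ t → u t ∈ frontier S} =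
      {u : C(ℝ≥0, ℝ) | MapsTo u univ (closure S)} ∩ {u | u 0 ∈ frontier S} ∩
        ({u | IsUpperSet (u ⁻¹' frontier S ∩ Ioi 0)} ∩
          {u | MapsTo u (Ioi 0) (frontier S)}ᶜ ∩
          {u | ∃ T, Ici T ⊆ u ⁻¹' frontier S}) := by
    ext u
    simp only [mem_inter_iff, mem_ofPred_eq, mem_compl_iff, mapsTo_univ_iff, and_assoc]
    refine and_congr_right fun hcl => and_congr_right fun _ => ?_
    simp only [hSF _ (hcl _)]
    exact exists_threshold_iff_isUpperSet_inter_Ioi (hF.preimage u.continuous) 0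
  rw [hset]
  exact ((ContinuousMap.isClosed_setOfPred_mapsTo isClosed_closure univ).measurableSet.inter
    (hF.preimage (continuous_eval_const 0)).measurableSet).inter
    (((measurableSet_setOf_isUpperSet_preimage_inter_Ioi hF 0).inter
      (ContinuousMap.isClosed_setOfPred_mapsTo hF _).measurableSet.compl).inter
      (measurableSet_setOf_exists_Ici_subset_preimage hF))
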